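/- Fix g ≥ 0 and consider the open set Ω ⊂ ℝ^{2g+2} × ℝ^{g+1} of points (E₀, ..., E_{2g+1}, α₀, ..., α_g) with E₀ < E₁ < ... < E_{2g+1} and E_{2k} < α_k < E_{2k+1} for each k. For 0 ≤ k ≤ g define c_k = sqrt( |∏_{j=0}^{2g+1}(α_k − E_j)| / ∏_{j≠k}(α_k − α_j)² ), and define the vector field V_k on Ω by: dE_j/dτ = c_k/(E_j − α_k) for j = 0,...,2g+1; dα_j/dτ = c_k/(α_j − α_k) for j ≠ k; and dα_k/dτ = (1/2) Σ_{j=0}^{2g+1} c_k/(E_j − α_k) − Σ_{j≠k} c_k/(α_j − α_k). Then each V_k is smooth on Ω, and the vector fields commute pairwise: for all j, k, the Lie bracket vanishes, i.e. (DV_k)[V_j] − (DV_j)[V_k] = 0 at every point of Ω, where DV denotes the Fréchet derivative of V. -/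

import Mathlib

set_option autoImplicit false

/-- Phase space of branch points `E₀,…,E_{2g+1}` and quasimomentum-zero projections
`α₀,…,α_g`. -/
abbrev IsoPhase (g : ℕ) := (Fin (2 * g + 2) → ℝ) × (Fin (g + 1) → ℝ)

/-- The open region `Ω`: `E₀ < E₁ < ⋯ < E_{2g+1}` and `E_{2k} < α_k < E_{2k+1}`. -/
def isoOmega (g : ℕ) : Set (IsoPhase g) :=
  {p | StrictMono p.1 ∧ ∀ k : Fin (g + 1),
    p.1 ⟨2 * (k : ℕ), by have := k.isLt; omega⟩ < p.2 k ∧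
    p.2 k < p.1 ⟨2 * (k : ℕ) + 1, by have := k.isLt; omega⟩}

/-- `c_k = sqrt | ∏ⱼ (α_k − E_j) / ∏_{j≠k} (α_k − α_j)² |`. -/
noncomputable def isoC (g : ℕ) (p : IsoPhase g) (k : Fin (g + 1)) : ℝ :=
  Real.sqrt |(∏ j, (p.2 k - p.1 j)) / ∏ j ∈ Finset.univ.erase k, (p.2 k - p.2 j) ^ 2|

/-- The isoperiodic deformation vector field `V_k`:
`dE_j/dτ = c_k/(E_j − α_k)`, `dα_j/dτ = c_k/(α_j − α_k)` for `j ≠ k`, and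
`dα_k/dτ = (1/2) Σⱼ c_k/(E_j − α_k) − Σ_{j≠k} c_k/(α_j − α_k)`. -/
noncomputable def isoV (g : ℕ) (k : Fin (g + 1)) (p : IsoPhase g) : IsoPhase g :=
  (fun j => isoC g p k / (p.1 j - p.2 k),
   fun j => if j = k then
      (1 / 2) * ∑ i, isoC g p k / (p.1 i - p.2 k) -
        ∑ i ∈ Finset.univ.erase k, isoC g p k / (p.2 i - p.2 k)
    else isoC g p k / (p.2 j - p.2 k))

/-!
Concatenate the coordinates into `y = (E, α)` and give weight `ε = 1/2` to the branch points and
`ε = -1` to the `α`'s. Then `V_k = c_k • u_k`, where `c_k = ∏_{i ≠ k} |y_i - y_k| ^ ε_i` and `u_k`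
is rational (`u_k i = 1 / (y_i - y_k)` for `i ≠ k`, `u_k k = Σ_{i ≠ k} ε_i / (y_i - y_k)`).
Since `D c_k = c_k ℓ_k` with `ℓ_k = Σ_{i ≠ k} ε_i / (y_i - y_k) (dy_i - dy_k)`,
`DV_k [V_j] = c_k c_j (Du_k [u_j] + ℓ_k (u_j) u_k)`, so the brackets vanish as soon as the
rational expression in parentheses is symmetric in `j, k`. That is a partial-fraction computation
which works for arbitrary weights `ε_i`, `i ≠ j, k`, provided `ε_j = ε_k = -1`.
-/

open Finset ContinuousLinearMap VectorField

theorem hasDerivAt_abs_rpow_of_ne_zero (e : ℝ) {t : ℝ} (ht : t ≠ 0) :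
    HasDerivAt (fun s : ℝ => |s| ^ e) (e * |t| ^ e / t) t := by
  refine ((Real.hasDerivAt_rpow_const (Or.inl (abs_ne_zero.2 ht))).comp t
    (hasDerivAt_abs ht)).congr_deriv ?_
  rw [Real.rpow_sub_one (abs_ne_zero.2 ht)]
  rcases ht.lt_or_gt with h | h
  · rw [abs_of_neg h, sign_neg h, SignType.coe_neg_one]
    field_simp
  · rw [abs_of_pos h, sign_pos h, SignType.coe_one, mul_one, mul_div_assoc]

namespace Isoperiodic

variable {ι : Type*} [Fintype ι] [DecidableEq ι] (ε : ι → ℝ)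

noncomputable def coordSub (i k : ι) : (ι → ℝ) →L[ℝ] ℝ :=
  proj (R := ℝ) (φ := fun _ : ι => ℝ) i - proj k

omit [Fintype ι] [DecidableEq ι] in
@[simp] theorem coordSub_apply (i k : ι) (v : ι → ℝ) : coordSub i k v = v i - v k := rfl

omit [DecidableEq ι] in
theorem hasFDerivAt_coordSub (i k : ι) (y : ι → ℝ) :
    HasFDerivAt (fun y : ι → ℝ => y i - y k) (coordSub i k) y :=
  (hasFDerivAt_apply i y).fun_sub (hasFDerivAt_apply k y)

noncomputable def coeff (k : ι) (y : ι → ℝ) : ℝ := ∏ i ∈ univ.erase k, |y i - y k| ^ ε i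

noncomputable def poleSum (k : ι) (y : ι → ℝ) : ℝ :=
  ∑ i ∈ univ.erase k, ε i / (y i - y k)

noncomputable def direction (k : ι) (y : ι → ℝ) : ι → ℝ := fun m =>
  if m = k then poleSum ε k y else (y m - y k)⁻¹

noncomputable def field (k : ι) : (ι → ℝ) → ι → ℝ := coeff ε k • direction ε k

noncomputable def coeffLogDeriv (k : ι) (y : ι → ℝ) : (ι → ℝ) →L[ℝ] ℝ :=
  ∑ i ∈ univ.erase k, (ε i / (y i - y k)) • coordSub i k

noncomputable def directionDeriv (k : ι) (y : ι → ℝ) : (ι → ℝ) →L[ℝ] ι → ℝ :=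
  pi fun m => if m = k then ∑ i ∈ univ.erase k, (-ε i / (y i - y k) ^ 2) • coordSub i k
    else (-((y m - y k) ^ 2)⁻¹) • coordSub m k

variable {ε} {k : ι} {y : ι → ℝ}

theorem hasFDerivAt_coeff (hy : ∀ i ≠ k, y i ≠ y k) :
    HasFDerivAt (coeff ε k) (coeff ε k y • coeffLogDeriv ε k y) y := by
  have hfactor (i) (hi : i ∈ univ.erase k) : HasFDerivAt (fun y : ι → ℝ => |y i - y k| ^ ε i)
      ((ε i * |y i - y k| ^ ε i / (y i - y k)) • coordSub i k) y := by
    have hd := hasDerivAt_abs_rpow_of_ne_zero (ε i) (sub_ne_zero.2 (hy i (ne_of_mem_erase hi)))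
    exact hd.comp_hasFDerivAt y (hasFDerivAt_coordSub i k y)
  refine (HasFDerivAt.finsetProd hfactor).congr_fderiv ?_
  rw [coeffLogDeriv, smul_sum]
  refine sum_congr rfl fun i hi => ?_
  rw [smul_smul, smul_smul, coeff, ← prod_erase_mul _ _ hi]
  congr 1
  ring

theorem hasFDerivAt_direction (hy : ∀ i ≠ k, y i ≠ y k) :
    HasFDerivAt (direction ε k) (directionDeriv ε k y) y := by
  refine hasFDerivAt_pi.2 fun m => ?_
  by_cases hm : m = k
  · simp only [direction, hm, if_true, poleSum]
    refine HasFDerivAt.fun_sum fun i hi => ?_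
    have hd : HasDerivAt (fun t : ℝ => ε i / t) (-ε i / (y i - y k) ^ 2) (y i - y k) := by
      simpa only [div_eq_mul_inv, neg_mul, mul_neg] using
        (hasDerivAt_inv (sub_ne_zero.2 (hy i (ne_of_mem_erase hi)))).const_mul (ε i)
    exact hd.comp_hasFDerivAt y (hasFDerivAt_coordSub i k y)
  · simp only [direction, hm, if_false]
    exact (hasDerivAt_inv (sub_ne_zero.2 (hy m hm))).comp_hasFDerivAt y
      (hasFDerivAt_coordSub m k y)

theorem hasFDerivAt_field (hy : ∀ i ≠ k, y i ≠ y k) :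
    HasFDerivAt (field ε k) (coeff ε k y • directionDeriv ε k y +
      (coeff ε k y • coeffLogDeriv ε k y).smulRight (direction ε k y)) y :=
  (hasFDerivAt_coeff hy).smul (hasFDerivAt_direction hy)

theorem contDiffAt_field {n : ℕ∞} (hy : ∀ i ≠ k, y i ≠ y k) :
    ContDiffAt ℝ n (field ε k) y := by
  have hsub (i) : ContDiffAt ℝ n (fun y : ι → ℝ => y i - y k) y :=
    ((contDiff_apply ℝ ℝ i).sub (contDiff_apply ℝ ℝ k)).contDiffAt
  have hne (i) (hi : i ≠ k) : y i - y k ≠ 0 := sub_ne_zero.2 (hy i hi)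
  have hcoeff : ContDiffAt ℝ n (coeff ε k) y := contDiffAt_prod fun i hi =>
    ((hsub i).abs (hne i (ne_of_mem_erase hi))).rpow_const_of_ne
      (abs_ne_zero.2 (hne i (ne_of_mem_erase hi)))
  refine hcoeff.smul (contDiffAt_pi.2 fun m => ?_)
  by_cases hm : m = k
  · simp only [direction, hm, if_true, poleSum]
    exact ContDiffAt.sum fun i hi => contDiffAt_const.div (hsub i) (hne i (ne_of_mem_erase hi))
  · simp only [direction, hm, if_false]
    exact (hsub m).inv (hne m hm)

variable (ε k y) in
theorem coeffLogDeriv_apply (v : ι → ℝ) :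
    coeffLogDeriv ε k y v = ∑ i ∈ univ.erase k, ε i / (y i - y k) * (v i - v k) := by
  simp [coeffLogDeriv]

variable (ε k y) in
theorem directionDeriv_apply_self (v : ι → ℝ) :
    directionDeriv ε k y v k = ∑ i ∈ univ.erase k, -ε i / (y i - y k) ^ 2 * (v i - v k) := by
  simp [directionDeriv]

variable (ε y) in
theorem directionDeriv_apply_of_ne {m : ι} (hm : m ≠ k) (v : ι → ℝ) :
    directionDeriv ε k y v m = -((y m - y k) ^ 2)⁻¹ * (v m - v k) := by
  simp [directionDeriv, hm]

variable (ε k y) in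
theorem direction_self : direction ε k y k = poleSum ε k y := if_pos rfl

variable (ε y) in
theorem direction_of_ne {m : ι} (hm : m ≠ k) : direction ε k y m = (y m - y k)⁻¹ := if_neg hm

variable (ε k y) in
theorem field_apply : field ε k y = coeff ε k y • direction ε k y := rfl

variable (ε y) in
theorem sum_erase_erase_eq_poleSum_sub {j : ι} (hjk : j ≠ k) :
    ∑ i ∈ (univ.erase k).erase j, ε i / (y i - y k) = poleSum ε k y - ε j / (y j - y k) :=
  sum_erase_eq_sub (mem_erase.2 ⟨hjk, mem_univ j⟩)

variable {j : ι}

theorem coeffLogDeriv_direction (hjk : j ≠ k) (hεj : ε j = -1) (hj : ∀ i ≠ j, y i ≠ y j)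
    (hk : ∀ i ≠ k, y i ≠ y k) :
    coeffLogDeriv ε k y (direction ε j y) = (ε k - 1) / (y k - y j) ^ 2 := by
  have hkj : y k - y j ≠ 0 := sub_ne_zero.2 (hj k hjk.symm)
  have hrest : ∑ i ∈ (univ.erase k).erase j,
        ε i / (y i - y k) * (direction ε j y i - direction ε j y k) =
      -(y k - y j)⁻¹ * ∑ i ∈ (univ.erase k).erase j, ε i / (y i - y j) := by
    rw [mul_sum]
    refine sum_congr rfl fun i hi => ?_
    have hij := ne_of_mem_erase hi
    have hik := ne_of_mem_erase (mem_of_mem_erase hi)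
    have := sub_ne_zero.2 (hj i hij)
    have := sub_ne_zero.2 (hk i hik)
    rw [direction_of_ne ε y hij, direction_of_ne ε y hjk.symm]
    field_simp
    ring
  rw [coeffLogDeriv_apply, ← add_sum_erase _ _ (mem_erase.2 ⟨hjk, mem_univ j⟩), hrest,
    erase_right_comm, sum_erase_erase_eq_poleSum_sub ε y hjk.symm, direction_self,
    direction_of_ne ε y hjk.symm, hεj]
  have : y j - y k ≠ 0 := sub_ne_zero.2 (hk j hjk)
  field_simp
  ring

theorem directionDeriv_add_coeffLogDeriv_apply_self_comm (hjk : j ≠ k) (hεj : ε j = -1)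
    (hεk : ε k = -1) (hj : ∀ i ≠ j, y i ≠ y j) (hk : ∀ i ≠ k, y i ≠ y k) :
    directionDeriv ε k y (direction ε j y) k +
        coeffLogDeriv ε k y (direction ε j y) * direction ε k y k =
      directionDeriv ε j y (direction ε k y) k +
        coeffLogDeriv ε j y (direction ε k y) * direction ε j y k := by
  have hkj : y k - y j ≠ 0 := sub_ne_zero.2 (hj k hjk.symm)
  have hjk' : y j - y k ≠ 0 := sub_ne_zero.2 (hk j hjk)
  have hrest : ∑ i ∈ (univ.erase k).erase j,
        -ε i / (y i - y k) ^ 2 * (direction ε j y i - direction ε j y k)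
      = ((y k - y j) ^ 2)⁻¹ * (∑ i ∈ (univ.erase k).erase j, ε i / (y i - y k) -
          ∑ i ∈ (univ.erase k).erase j, ε i / (y i - y j)) := by
    rw [← sum_sub_distrib, mul_sum]
    refine sum_congr rfl fun i hi => ?_
    have hij := ne_of_mem_erase hi
    have hik := ne_of_mem_erase (mem_of_mem_erase hi)
    have := sub_ne_zero.2 (hj i hij)
    have := sub_ne_zero.2 (hk i hik)
    rw [direction_of_ne ε y hij, direction_of_ne ε y hjk.symm]
    field_simp
    ring
  rw [coeffLogDeriv_direction hjk hεj hj hk, coeffLogDeriv_direction hjk.symm hεk hk hj,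
    directionDeriv_apply_self, directionDeriv_apply_of_ne ε y hjk.symm,
    ← add_sum_erase _ _ (mem_erase.2 ⟨hjk, mem_univ j⟩), hrest,
    sum_erase_erase_eq_poleSum_sub ε y hjk, erase_right_comm,
    sum_erase_erase_eq_poleSum_sub ε y hjk.symm, direction_self, direction_self,
    direction_of_ne ε y hjk.symm, direction_of_ne ε y hjk, hεj, hεk]
  field_simp
  ring

theorem directionDeriv_add_coeffLogDeriv_comm (hεj : ε j = -1) (hεk : ε k = -1)
    (hj : ∀ i ≠ j, y i ≠ y j) (hk : ∀ i ≠ k, y i ≠ y k) :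
    directionDeriv ε k y (direction ε j y) +
        coeffLogDeriv ε k y (direction ε j y) • direction ε k y =
      directionDeriv ε j y (direction ε k y) +
        coeffLogDeriv ε j y (direction ε k y) • direction ε j y := by
  rcases eq_or_ne j k with rfl | hjk
  · rfl
  funext m
  simp only [Pi.add_apply, Pi.smul_apply, smul_eq_mul]
  rcases eq_or_ne m k with rfl | hmk
  · exact directionDeriv_add_coeffLogDeriv_apply_self_comm hjk hεj hεk hj hk
  rcases eq_or_ne m j with rfl | hmj
  · exact (directionDeriv_add_coeffLogDeriv_apply_self_comm hjk.symm hεk hεj hk hj).symm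
  rw [directionDeriv_apply_of_ne ε y hmk, directionDeriv_apply_of_ne ε y hmj,
    coeffLogDeriv_direction hjk hεj hj hk, coeffLogDeriv_direction hjk.symm hεk hk hj,
    direction_of_ne ε y hmk, direction_of_ne ε y hmj, direction_of_ne ε y hjk,
    direction_of_ne ε y hjk.symm, hεj, hεk]
  have := sub_ne_zero.2 (hj k hjk.symm)
  have := sub_ne_zero.2 (hk j hjk)
  have := sub_ne_zero.2 (hj m hmj)
  have := sub_ne_zero.2 (hk m hmk)
  field_simp
  ring

theorem fderiv_field_apply_field (hk : ∀ i ≠ k, y i ≠ y k) :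
    fderiv ℝ (field ε k) y (field ε j y) = (coeff ε k y * coeff ε j y) •
      (directionDeriv ε k y (direction ε j y) +
        coeffLogDeriv ε k y (direction ε j y) • direction ε k y) := by
  rw [(hasFDerivAt_field hk).fderiv, field_apply]
  simp only [add_apply, smul_apply, smulRight_apply, map_smul, smul_eq_mul, smul_add, smul_smul]
  module

theorem lieBracket_field (hεj : ε j = -1) (hεk : ε k = -1)
    (hj : ∀ i ≠ j, y i ≠ y j) (hk : ∀ i ≠ k, y i ≠ y k) :
    lieBracket ℝ (field ε j) (field ε k) y = 0 := by
  rw [lieBracket, fderiv_field_apply_field hk, fderiv_field_apply_field hj,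
    directionDeriv_add_coeffLogDeriv_comm hεj hεk hj hk, mul_comm, sub_self]

end Isoperiodic

theorem ContinuousLinearEquiv.lieBracket_conj {𝕜 E F : Type*} [NontriviallyNormedField 𝕜]
    [NormedAddCommGroup E] [NormedSpace 𝕜 E] [NormedAddCommGroup F] [NormedSpace 𝕜 F]
    (L : E ≃L[𝕜] F) (V W : E → E) (x : F) :
    lieBracket 𝕜 (L ∘ V ∘ L.symm) (L ∘ W ∘ L.symm) x =
      L (lieBracket 𝕜 V W (L.symm x)) := by
  simp only [lieBracket, L.comp_fderiv, L.symm.comp_right_fderiv, coe_comp, coe_coe,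
    Function.comp_apply, map_sub, L.symm_apply_apply]

open Isoperiodic

noncomputable def isoWeights (g : ℕ) : Fin (2 * g + 2) ⊕ Fin (g + 1) → ℝ :=
  Sum.elim (fun _ => 1 / 2) (fun _ => -1)

theorem isoWeights_inr (g : ℕ) (k : Fin (g + 1)) : isoWeights g (Sum.inr k) = -1 := rfl

noncomputable def isoCoords (g : ℕ) :
    (Fin (2 * g + 2) ⊕ Fin (g + 1) → ℝ) ≃L[ℝ] IsoPhase g :=
  ContinuousLinearEquiv.sumPiEquivProdPi ℝ _ _ fun _ => ℝ

@[simp] theorem isoCoords_apply (g : ℕ) (y : Fin (2 * g + 2) ⊕ Fin (g + 1) → ℝ) :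
    isoCoords g y = (y ∘ Sum.inl, y ∘ Sum.inr) := rfl

@[simp] theorem isoCoords_symm_apply_inl (g : ℕ) (p : IsoPhase g) (l : Fin (2 * g + 2)) :
    (isoCoords g).symm p (Sum.inl l) = p.1 l := rfl

@[simp] theorem isoCoords_symm_apply_inr (g : ℕ) (p : IsoPhase g) (l : Fin (g + 1)) :
    (isoCoords g).symm p (Sum.inr l) = p.2 l := rfl

theorem Finset.univ_erase_inr {α β : Type*} [Fintype α] [Fintype β] [DecidableEq α]
    [DecidableEq β] (b : β) :
    (univ : Finset (α ⊕ β)).erase (Sum.inr b) = univ.disjSum (univ.erase b) := by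
  ext (i | i) <;> simp

theorem isoC_eq_coeff (g : ℕ) (p : IsoPhase g) (k : Fin (g + 1)) :
    isoC g p k = coeff (isoWeights g) (Sum.inr k) ((isoCoords g).symm p) := by
  have hE (l : Fin (2 * g + 2)) : |p.1 l - p.2 k| ^ (1 / 2 : ℝ) = √|p.2 k - p.1 l| := by
    rw [abs_sub_comm, Real.sqrt_eq_rpow]
  have hα (l : Fin (g + 1)) : |p.2 l - p.2 k| ^ (-1 : ℝ) = |p.2 k - p.2 l|⁻¹ := by
    rw [abs_sub_comm, Real.rpow_neg_one]
  simp only [isoC, coeff, univ_erase_inr, prod_disjSum, isoCoords_symm_apply_inl,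
    isoCoords_symm_apply_inr, isoWeights, Sum.elim_inl, Sum.elim_inr, hE, hα, abs_div,
    abs_prod, abs_pow]
  rw [Real.sqrt_div' _ (by positivity), Real.sqrt_prod _ fun _ _ => abs_nonneg _,
    Real.sqrt_prod _ fun _ _ => by positivity]
  simp only [Real.sqrt_sq (abs_nonneg _), prod_inv_distrib, div_eq_mul_inv]

theorem isoV_eq_conj (g : ℕ) (k : Fin (g + 1)) :
    isoV g k = isoCoords g ∘ field (isoWeights g) (Sum.inr k) ∘ (isoCoords g).symm := by
  funext p
  simp only [Function.comp_apply, isoCoords_apply, field_apply, isoV, ← isoC_eq_coeff]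
  refine Prod.ext (funext fun m => ?_) (funext fun m => ?_)
  · simp [direction_of_ne, div_eq_mul_inv]
  · rcases eq_or_ne m k with rfl | hmk
    · simp only [if_pos, Function.comp_apply, Pi.smul_apply, smul_eq_mul, direction_self, poleSum,
        univ_erase_inr, sum_disjSum, isoCoords_symm_apply_inl, isoCoords_symm_apply_inr,
        isoWeights, Sum.elim_inl, Sum.elim_inr, mul_add, mul_sum, sub_eq_add_neg,
        ← sum_neg_distrib]
      congr 1 <;> exact sum_congr rfl fun _ _ => by ring
    · simp [direction_of_ne, hmk, div_eq_mul_inv]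

section isoOmega

variable {g : ℕ} {p : IsoPhase g}

theorem strictMono_snd_of_mem_isoOmega (hp : p ∈ isoOmega g) : StrictMono p.2 := by
  obtain ⟨hE, hα⟩ := hp
  intro a b hab
  calc p.2 a < p.1 ⟨2 * a + 1, by omega⟩ := (hα a).2
    _ ≤ p.1 ⟨2 * b, by omega⟩ :=
      hE.monotone (Fin.mk_le_mk.2 (by rw [Fin.lt_def] at hab; omega))
    _ < p.2 b := (hα b).1

theorem fst_ne_snd_of_mem_isoOmega (hp : p ∈ isoOmega g) (l : Fin (2 * g + 2))
    (k : Fin (g + 1)) : p.1 l ≠ p.2 k := by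
  obtain ⟨hE, hα⟩ := hp
  rcases le_or_gt (l : ℕ) (2 * k) with h | h
  · exact ((hE.monotone (Fin.mk_le_mk.2 h : l ≤ ⟨2 * k, by omega⟩)).trans_lt (hα k).1).ne
  · exact ((hα k).2.trans_le
      (hE.monotone (Fin.mk_le_mk.2 h : ⟨2 * k + 1, by omega⟩ ≤ l))).ne'

theorem injective_isoCoords_symm_of_mem_isoOmega (hp : p ∈ isoOmega g) :
    Function.Injective ((isoCoords g).symm p) := by
  rintro (a | a) (b | b) h <;>
    simp only [isoCoords_symm_apply_inl, isoCoords_symm_apply_inr] at h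
  · rw [hp.1.injective h]
  · exact absurd h (fst_ne_snd_of_mem_isoOmega hp a b)
  · exact absurd h.symm (fst_ne_snd_of_mem_isoOmega hp b a)
  · rw [(strictMono_snd_of_mem_isoOmega hp).injective h]

end isoOmega

/-- The isoperiodic deformation vector fields are smooth on `Ω` and commute pairwise:
their Lie brackets, computed with the Fréchet derivative, vanish on `Ω`. -/
theorem isoperiodic_flows_commute (g : ℕ) :
    (∀ k : Fin (g + 1), ContDiffOn ℝ (⊤ : ℕ∞) (isoV g k) (isoOmega g)) ∧
    (∀ j k : Fin (g + 1), ∀ p ∈ isoOmega g,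
      fderiv ℝ (isoV g k) p (isoV g j p) - fderiv ℝ (isoV g j) p (isoV g k p) = 0) := by
  refine ⟨fun k p hp => ?_, fun j k p hp => ?_⟩ <;>
    have hy := injective_isoCoords_symm_of_mem_isoOmega hp
  · rw [isoV_eq_conj]
    exact ((isoCoords g).contDiff.contDiffAt.comp p ((contDiffAt_field fun _ => hy.ne).comp p
      (isoCoords g).symm.contDiff.contDiffAt)).contDiffWithinAt
  · change lieBracket ℝ (isoV g j) (isoV g k) p = 0
    rw [isoV_eq_conj, isoV_eq_conj, ContinuousLinearEquiv.lieBracket_conj,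
      lieBracket_field (isoWeights_inr g j) (isoWeights_inr g k) (fun _ => hy.ne)
        (fun _ => hy.ne), map_zero]
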